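/- arXiv:math/0006047 — 4 statements merged into one kernel-verified Lean document; each statement's English description precedes it below -/
import Mathlib

section
/- For natural numbers i, j, q with j ≤ i, the identity δ_{i,i−j+q;j,q} = δ_{i,i−j+q;0,0} + (j(i−j−1) + q(2j−q) + q)/((n+1)·i) holds, and the numerator j(i−j−1) + q(2j−q) + q is nonnegative when q ≤ j ≤ i−1. -/
/-- The resonant value δ_{i,p;j,q} (as a rational number). -/
def deltaRes (n i p j q : ℕ) : ℚ :=
  ((n : ℚ) * ((i : ℚ) - (j : ℚ)) - ((p : ℚ) * (i : ℚ) - (q : ℚ) * (j : ℚ))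
      + ((i : ℚ) ^ 2 - (j : ℚ) ^ 2) + (p : ℚ) * ((p : ℚ) - 1)
      - (q : ℚ) * ((q : ℚ) - 1))
    / (((n : ℚ) + 1) * ((i : ℚ) - (j : ℚ)))

/-- The identity δ_{i,i−j+q;j,q} = δ_{i,i−j+q;0,0} + (j(i−j−1)+q(2j−q)+q)/((n+1)i),
and the numerator is nonnegative when q ≤ j ≤ i−1. -/
theorem stmt6 (n : ℕ) (hn : 2 ≤ n) (i j q : ℕ) (hij : j < i) :
    deltaRes n i (i - j + q) j q
        = deltaRes n i (i - j + q) 0 0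
          + ((j : ℚ) * ((i : ℚ) - (j : ℚ) - 1) + (q : ℚ) * (2 * (j : ℚ) - (q : ℚ))
              + (q : ℚ)) / (((n : ℚ) + 1) * (i : ℚ)) ∧
      (q ≤ j →
        0 ≤ (j : ℤ) * ((i : ℤ) - (j : ℤ) - 1) + (q : ℤ) * (2 * (j : ℤ) - (q : ℤ))
            + (q : ℤ)) := by
  have hji : j ≤ i := le_of_lt hij
  have hcast : ((i - j + q : ℕ) : ℚ) = (i : ℚ) - (j : ℚ) + (q : ℚ) := by
    push_cast [Nat.cast_sub hji]; ring
  constructor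
  · have hiq : (0 : ℚ) < (i : ℚ) := by exact_mod_cast Nat.pos_of_ne_zero (by omega)
    have hijq : (j : ℚ) < (i : ℚ) := by exact_mod_cast hij
    have h1 : (i : ℚ) - (j : ℚ) ≠ 0 := by linarith
    have h2 : (n : ℚ) + 1 ≠ 0 := by positivity
    have h3 : (i : ℚ) ≠ 0 := ne_of_gt hiq
    simp only [deltaRes, hcast, Nat.cast_zero]
    field_simp
    ring
  · intro hqj
    have hqj' : (q : ℤ) ≤ (j : ℤ) := by exact_mod_cast hqj
    have hij' : (j : ℤ) + 1 ≤ (i : ℤ) := by exact_mod_cast hij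
    nlinarith [sq_nonneg ((j : ℤ) - (q : ℤ)), Int.natCast_nonneg q, Int.natCast_nonneg j]
end

section
/- Let i, p, j, q be natural numbers satisfying p ≤ ⌊i/2⌋, q ≤ ⌊j/2⌋, i > j, and 0 ≤ p − q ≤ i − j. Then δ_{i,p;j,q} ≥ δ_{i,⌊i/2⌋;0,0}. In particular every critical shift value is at least 1. -/
/-- Key cross-multiplied inequality over ℚ. -/
lemma keyIneq (N I P J Q M : ℚ)
    (hq0 : 0 ≤ Q) (hb : 2 * Q ≤ J) (hs : Q ≤ P) (hd1 : J + 1 ≤ I)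
    (hsd : P - Q ≤ I - J) (hpm : P ≤ M) (hm : 2 * M ≤ I + 1) :
    (N * I - M * I + I ^ 2 + M * (M - 1)) * (I - J)
      ≤ (N * (I - J) - (P * I - Q * J) + (I ^ 2 - J ^ 2) + P * (P - 1)
          - Q * (Q - 1)) * I := by
  have hb0 : (0:ℚ) ≤ J - 2 * Q := by linarith
  have hds : (0:ℚ) ≤ (I - J) - (P - Q) := by linarith
  have hd1' : (0:ℚ) ≤ (I - J) - 1 := by linarith
  have hd0 : (0:ℚ) ≤ I - J := by linarith
  have hmp : (0:ℚ) ≤ M - P := by linarith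
  have himp : (0:ℚ) ≤ I + 1 - M - P := by linarith
  nlinarith [mul_nonneg (mul_nonneg hb0 hb0) hds,
    mul_nonneg hb0 (sq_nonneg (2 * (P - Q) - (I - J) - 1)),
    mul_nonneg (mul_nonneg hb0 (by linarith : (0:ℚ) ≤ 3 * (I - J) + 1)) hd1',
    mul_nonneg hq0 hd1',
    mul_nonneg hq0 (sq_nonneg (2 * (P - Q) - 1)),
    mul_nonneg (mul_nonneg hq0 hd0) hds,
    mul_nonneg (mul_nonneg hq0 hb0) hds,
    mul_nonneg (mul_nonneg hq0 hb0) hd0,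
    mul_nonneg (mul_nonneg hq0 hq0) hd0,
    mul_nonneg (mul_nonneg hd0 hmp) himp, hq0]

set_option maxHeartbeats 1000000 in
/-- Every critical shift value δ_{i,p;j,q} is at least δ_{i,⌊i/2⌋;0,0},
and in particular at least 1. -/
theorem stmt9 (n : ℕ) (hn : 2 ≤ n) (i p j q : ℕ)
    (hp : 2 * p ≤ i) (hq : 2 * q ≤ j) (hij : j < i)
    (hqp : q ≤ p) (hpq : p - q ≤ i - j) :
    deltaRes n i (i / 2) 0 0 ≤ deltaRes n i p j q ∧ 1 ≤ deltaRes n i p j q := by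
  have hi0 : 0 < i := Nat.pos_of_ne_zero (by omega)
  have hpm : p ≤ i / 2 := by omega
  have hm2 : 2 * (i / 2) ≤ i + 1 := by omega
  -- rational facts
  have hJ : ((j:ℚ)) + 1 ≤ i := by exact_mod_cast hij
  have hI0 : (0:ℚ) < i := by exact_mod_cast hi0
  have hN0 : (0:ℚ) < (n:ℚ) + 1 := by positivity
  have hD0 : (0:ℚ) < (i:ℚ) - j := by linarith
  have hQ0 : (0:ℚ) ≤ q := by positivity
  have hB : 2 * (q:ℚ) ≤ j := by exact_mod_cast hq
  have hS : (q:ℚ) ≤ p := by exact_mod_cast hqp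
  have hSD : (p:ℚ) - q ≤ (i:ℚ) - j := by
    have h1 : ((p - q : ℕ) : ℚ) ≤ ((i - j : ℕ) : ℚ) := by exact_mod_cast hpq
    rwa [Nat.cast_sub hqp, Nat.cast_sub hij.le] at h1
  have hPM : (p:ℚ) ≤ (i / 2 : ℕ) := by exact_mod_cast hpm
  have hM : 2 * ((i / 2 : ℕ) : ℚ) ≤ (i:ℚ) + 1 := by exact_mod_cast hm2
  have key := keyIneq (n:ℚ) (i:ℚ) (p:ℚ) (j:ℚ) (q:ℚ) ((i / 2 : ℕ) : ℚ)
    hQ0 hB hS hJ hSD hPM hM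
  have h1 : deltaRes n i (i / 2) 0 0 ≤ deltaRes n i p j q := by
    unfold deltaRes
    simp only [Nat.cast_zero, sub_zero]
    rw [div_le_div_iff₀ (by positivity) (by positivity)]
    nlinarith [mul_le_mul_of_nonneg_left key hN0.le]
  refine ⟨h1, le_trans ?_ h1⟩
  -- 1 ≤ δ_{i, i/2; 0, 0}
  unfold deltaRes
  simp only [Nat.cast_zero, sub_zero]
  rw [le_div_iff₀ (by positivity)]
  rcases (by omega : i = 2 * (i / 2) ∨ i = 2 * (i / 2) + 1) with h | h
  · have hm1 : 1 ≤ i / 2 := by omega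
    have hIQ : (i:ℚ) = 2 * ((i / 2 : ℕ) : ℚ) := by exact_mod_cast h
    have hm1' : (1:ℚ) ≤ ((i / 2 : ℕ) : ℚ) := by exact_mod_cast hm1
    rw [hIQ]
    nlinarith [mul_nonneg (by positivity : (0:ℚ) ≤ (n:ℚ)) (by linarith : (0:ℚ) ≤ ((i / 2 : ℕ) : ℚ)), hm1']
  · have hIQ : (i:ℚ) = 2 * ((i / 2 : ℕ) : ℚ) + 1 := by exact_mod_cast h
    have hm0 : (0:ℚ) ≤ ((i / 2 : ℕ) : ℚ) := by positivity
    rw [hIQ]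
    nlinarith [sq_nonneg ((i / 2 : ℕ) : ℚ), hm0]
end

section
/- The set of critical shift values contained in any compact interval [a,b] is finite, and it is empty if b < 1. -/
/-- The set of critical shift values. -/
def criticalSet (n : ℕ) : Set ℚ :=
  {d | ∃ i p j q : ℕ, 2 * p ≤ i ∧ 2 * q ≤ j ∧ j < i ∧ q ≤ p ∧ p - q ≤ i - j ∧
        d = deltaRes n i p j q}

lemma key (n i p j q : ℕ) (hn : 2 ≤ n) (h1 : 2 * p ≤ i) (h2 : 2 * q ≤ j)
    (h3 : j < i) (h4 : q ≤ p) (h5 : p - q ≤ i - j) :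
    1 ≤ deltaRes n i p j q ∧
      ((i : ℚ) - 2) / (2 * ((n : ℚ) + 1)) + 1 ≤ deltaRes n i p j q := by
  have hnq : (0:ℚ) < (n:ℚ) + 1 := by positivity
  rcases Nat.lt_or_ge i 2 with hi | hi
  · -- i = 1, so j = 0, p = 0, q = 0
    have hi1 : i = 1 := by omega
    have hj : j = 0 := by omega
    have hp : p = 0 := by omega
    have hq : q = 0 := by omega
    subst hi1 hj hp hq
    have hval : deltaRes n 1 0 0 0 = 1 := by
      unfold deltaRes
      rw [div_eq_one_iff_eq (by push_cast; nlinarith)]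
      push_cast; ring
    rw [hval]
    refine ⟨le_refl 1, ?_⟩
    have : ((1:ℚ) - 2) / (2 * ((n:ℚ) + 1)) ≤ 0 :=
      div_nonpos_of_nonpos_of_nonneg (by norm_num) (by positivity)
    push_cast
    linarith
  · have h5' : (p : ℚ) - q ≤ (i : ℚ) - j := by
      have : ((p - q : ℕ) : ℚ) ≤ ((i - j : ℕ) : ℚ) := by exact_mod_cast h5
      rwa [Nat.cast_sub h4, Nat.cast_sub h3.le] at this
    have h1' : 2 * (p : ℚ) ≤ i := by exact_mod_cast h1
    have h2' : 2 * (q : ℚ) ≤ j := by exact_mod_cast h2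
    have h3' : (j : ℚ) + 1 ≤ i := by exact_mod_cast h3
    have h4' : (q : ℚ) ≤ p := by exact_mod_cast h4
    have hi' : (2 : ℚ) ≤ i := by exact_mod_cast hi
    have hq0 : (0 : ℚ) ≤ q := Nat.cast_nonneg q
    have hp0 : (0 : ℚ) ≤ p := Nat.cast_nonneg p
    have hj0 : (0 : ℚ) ≤ j := Nat.cast_nonneg j
    have hD : (0 : ℚ) < ((n : ℚ) + 1) * ((i : ℚ) - (j : ℚ)) := by
      apply mul_pos hnq; linarith
    obtain ⟨D, hDdef⟩ : ∃ D : ℚ, D = ((n : ℚ) + 1) * ((i : ℚ) - (j : ℚ)) := ⟨_, rfl⟩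
    obtain ⟨N, hN⟩ : ∃ N : ℚ, N = ((n : ℚ) * ((i : ℚ) - (j : ℚ)) - ((p : ℚ) * (i : ℚ) - (q : ℚ) * (j : ℚ))
        + ((i : ℚ) ^ 2 - (j : ℚ) ^ 2) + (p : ℚ) * ((p : ℚ) - 1)
        - (q : ℚ) * ((q : ℚ) - 1)) := ⟨_, rfl⟩
    rw [← hDdef] at hD
    have hkey : ((i:ℚ) - j) * ((i:ℚ) - 2) ≤ 2 * (N - D) := by
      rcases le_or_gt ((j:ℚ) + 1) ((p:ℚ) + q) with hc | hc
      · rw [hN, hDdef]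
        nlinarith [mul_nonneg (sub_nonneg.2 h4') (sub_nonneg.2 hc),
          mul_nonneg (sub_nonneg.2 h3') (sub_nonneg.2 h1')]
      · rw [hN, hDdef]
        nlinarith [mul_nonneg (sub_nonneg.2 h5') (sub_nonneg.2 hc.le),
          mul_nonneg (sub_nonneg.2 h3') hq0,
          mul_nonneg (sub_nonneg.2 h3') (sub_nonneg.2 hi')]
    have hsplit : deltaRes n i p j q = (N - D) / D + 1 := by
      unfold deltaRes
      rw [← hDdef, ← hN]
      field_simp
      ring
    have hND : (0:ℚ) ≤ N - D := by linarith [hkey, mul_nonneg (sub_nonneg.2 h3') (sub_nonneg.2 hi')]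
    constructor
    · rw [hsplit]
      have := div_nonneg hND hD.le
      linarith
    · rw [hsplit]
      have h2d : ((i:ℚ) - 2) / (2 * ((n:ℚ) + 1)) ≤ (N - D) / D := by
        rw [div_le_div_iff₀ (by positivity) hD, hDdef]
        have hkey' := hkey
        rw [hDdef] at hkey'
        linarith [mul_le_mul_of_nonneg_left hkey' hnq.le]
      linarith

/-- The set of critical shift values in any interval [a,b] is finite,
and empty if b < 1. -/
theorem stmt10 (n : ℕ) (hn : 2 ≤ n) (a b : ℚ) :
    (criticalSet n ∩ Set.Icc a b).Finite ∧
      (b < 1 → criticalSet n ∩ Set.Icc a b = ∅) := by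
  constructor
  · set K : ℕ := ⌈2 * ((n : ℚ) + 1) * (b - 1) + 2⌉₊ + 1 with hK
    apply Set.Finite.subset
      ((((Set.finite_Iio K).prod ((Set.finite_Iio K).prod
        ((Set.finite_Iio K).prod (Set.finite_Iio K)))).image
        (fun t : ℕ × ℕ × ℕ × ℕ => deltaRes n t.1 t.2.1 t.2.2.1 t.2.2.2)))
    rintro d ⟨⟨i, p, j, q, h1, h2, h3, h4, h5, hd⟩, hmem⟩
    have hkey := (key n i p j q hn h1 h2 h3 h4 h5).2
    have hb : ((i : ℚ) - 2) / (2 * ((n : ℚ) + 1)) ≤ b - 1 := by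
      have := hmem.2
      rw [hd] at this
      linarith
    have hpos : (0 : ℚ) < 2 * ((n : ℚ) + 1) := by positivity
    have hiq : (i : ℚ) ≤ 2 * ((n : ℚ) + 1) * (b - 1) + 2 := by
      have := (div_le_iff₀ hpos).mp hb
      nlinarith
    have hiK : i < K := by
      have h1 := hiq.trans (Nat.le_ceil _)
      have : i ≤ ⌈2 * ((n : ℚ) + 1) * (b - 1) + 2⌉₊ := by exact_mod_cast h1
      omega
    refine ⟨(i, p, j, q), ⟨hiK, by simp only [Set.mem_prod, Set.mem_Iio]; omega⟩, hd.symm⟩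
  · intro hb
    rw [Set.eq_empty_iff_forall_notMem]
    rintro d ⟨⟨i, p, j, q, h1, h2, h3, h4, h5, hd⟩, hmem⟩
    have hkey := (key n i p j q hn h1 h2 h3 h4 h5).1
    rw [← hd] at hkey
    have := hmem.2
    linarith
end

section
/- Consider the differential operator C^t on polynomials P(α, β) in 2n variables α₁,…,αₙ, β₁,…,βₙ given by C^t P = n(n+1)δ(δ−1)P + 2(n+1)(1−δ)(E_α + E_β)P + Σ_{i,j} Σ_{x,y ∈ {α,β}} x_i y_j ∂_{x_j}∂_{y_i} P + Σ_{i,j} Σ_{x,y ∈ {α,β}} x_i y_j ∂_{x_i}∂_{y_j} P, where E_α = Σᵢ αᵢ ∂_{αᵢ} and E_β = Σᵢ βᵢ ∂_{βᵢ}. Then for natural numbers q ≤ min(k,l), the polynomial h_{k,l,q} = (α₁β₂ − α₂β₁)^q α₁^{k−q} β₁^{l−q} satisfies C^t h_{k,l,q} = γ_{k+l,q} · h_{k,l,q}, where γ_{k+l,q} = n(n+1)δ(δ−1) − 2((n+1)δ − n + q)(k+l) + 2(k+l)² + 2q(q−1). -/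
open MvPolynomial

/-- Variable picker: `vSel true i` is αᵢ (left copy), `vSel false i` is βᵢ. -/
def vSel (n : ℕ) (b : Bool) (i : Fin n) : Fin n ⊕ Fin n :=
  if b then Sum.inl i else Sum.inr i

/-- The Casimir operator C^t of sl(n+1) acting on symbols, written as a
differential operator on polynomials in α₁,…,αₙ,β₁,…,βₙ. -/
noncomputable def casT (n : ℕ) (δ : ℝ) (P : MvPolynomial (Fin n ⊕ Fin n) ℝ) :
    MvPolynomial (Fin n ⊕ Fin n) ℝ :=
  C ((n : ℝ) * ((n : ℝ) + 1) * δ * (δ - 1)) * P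
  + C (2 * ((n : ℝ) + 1) * (1 - δ)) *
      (∑ i : Fin n, (X (Sum.inl i) * pderiv (Sum.inl i) P
        + X (Sum.inr i) * pderiv (Sum.inr i) P))
  + ∑ i : Fin n, ∑ j : Fin n, ∑ x : Bool, ∑ y : Bool,
      X (vSel n x i) * X (vSel n y j) * pderiv (vSel n x j) (pderiv (vSel n y i) P)
  + ∑ i : Fin n, ∑ j : Fin n, ∑ x : Bool, ∑ y : Bool,
      X (vSel n x i) * X (vSel n y j) * pderiv (vSel n x i) (pderiv (vSel n y j) P)

/-- The highest weight vector h_{k,l,q} = (α₁β₂ − α₂β₁)^q α₁^{k−q} β₁^{l−q}. -/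
noncomputable def hwv (n : ℕ) (hn : 2 ≤ n) (k l q : ℕ) :
    MvPolynomial (Fin n ⊕ Fin n) ℝ :=
  (X (Sum.inl (⟨0, by omega⟩ : Fin n)) * X (Sum.inr (⟨1, by omega⟩ : Fin n))
    - X (Sum.inl (⟨1, by omega⟩ : Fin n)) * X (Sum.inr (⟨0, by omega⟩ : Fin n))) ^ q
  * X (Sum.inl (⟨0, by omega⟩ : Fin n)) ^ (k - q)
  * X (Sum.inr (⟨0, by omega⟩ : Fin n)) ^ (l - q)


private lemma sum_two' {n : ℕ} (hn : 2 ≤ n) {M : Type*} [AddCommMonoid M] (f : Fin n → M)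
    (hf : ∀ i : Fin n, 2 ≤ (i : ℕ) → f i = 0) :
    ∑ i : Fin n, f i = f ⟨0, by omega⟩ + f ⟨1, by omega⟩ := by
  classical
  rw [← Finset.sum_subset (Finset.subset_univ ({⟨0, by omega⟩, ⟨1, by omega⟩} : Finset (Fin n)))]
  · rw [Finset.sum_insert (by simp [Fin.ext_iff]), Finset.sum_singleton]
  · intro x _ hx
    apply hf
    simp [Finset.mem_insert, Fin.ext_iff] at hx
    omega

private lemma pderiv_pderiv_comm' {σ R : Type*} [CommSemiring R] (i j : σ)
    (p : MvPolynomial σ R) :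
    pderiv i (pderiv j p) = pderiv j (pderiv i p) := by
  classical
  induction p using MvPolynomial.induction_on' with
  | monomial s a =>
      rcases eq_or_ne i j with rfl | hij
      · rfl
      · simp only [pderiv_monomial, Finsupp.tsub_apply, Finsupp.single_eq_of_ne' hij,
          Finsupp.single_eq_of_ne' hij.symm, tsub_zero]
        rw [tsub_right_comm]
        ring_nf
  | add p q hp hq => simp [hp, hq]

private lemma casT_reduced (n : ℕ) (hn : 2 ≤ n) (δ : ℝ) (P : MvPolynomial (Fin n ⊕ Fin n) ℝ)
    (hP : ∀ i : Fin n, 2 ≤ (i : ℕ) →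
      pderiv (Sum.inl i) P = 0 ∧ pderiv (Sum.inr i) P = 0) :
    casT n δ P =
      C ((n : ℝ) * ((n : ℝ) + 1) * δ * (δ - 1)) * P
      + C (2 * ((n : ℝ) + 1) * (1 - δ)) *
          ((X (Sum.inl (⟨0, by omega⟩ : Fin n)) * pderiv (Sum.inl (⟨0, by omega⟩ : Fin n)) P
            + X (Sum.inr (⟨0, by omega⟩ : Fin n)) * pderiv (Sum.inr (⟨0, by omega⟩ : Fin n)) P)
          + (X (Sum.inl (⟨1, by omega⟩ : Fin n)) * pderiv (Sum.inl (⟨1, by omega⟩ : Fin n)) P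
            + X (Sum.inr (⟨1, by omega⟩ : Fin n)) * pderiv (Sum.inr (⟨1, by omega⟩ : Fin n)) P))
      + ((∑ x : Bool, ∑ y : Bool,
            X (vSel n x ⟨0, by omega⟩) * X (vSel n y ⟨0, by omega⟩) *
              pderiv (vSel n x ⟨0, by omega⟩) (pderiv (vSel n y ⟨0, by omega⟩) P)
          + ∑ x : Bool, ∑ y : Bool,
            X (vSel n x ⟨0, by omega⟩) * X (vSel n y ⟨1, by omega⟩) *
              pderiv (vSel n x ⟨1, by omega⟩) (pderiv (vSel n y ⟨0, by omega⟩) P))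
        + (∑ x : Bool, ∑ y : Bool,
            X (vSel n x ⟨1, by omega⟩) * X (vSel n y ⟨0, by omega⟩) *
              pderiv (vSel n x ⟨0, by omega⟩) (pderiv (vSel n y ⟨1, by omega⟩) P)
          + ∑ x : Bool, ∑ y : Bool,
            X (vSel n x ⟨1, by omega⟩) * X (vSel n y ⟨1, by omega⟩) *
              pderiv (vSel n x ⟨1, by omega⟩) (pderiv (vSel n y ⟨1, by omega⟩) P)))
      + ((∑ x : Bool, ∑ y : Bool,
            X (vSel n x ⟨0, by omega⟩) * X (vSel n y ⟨0, by omega⟩) *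
              pderiv (vSel n x ⟨0, by omega⟩) (pderiv (vSel n y ⟨0, by omega⟩) P)
          + ∑ x : Bool, ∑ y : Bool,
            X (vSel n x ⟨0, by omega⟩) * X (vSel n y ⟨1, by omega⟩) *
              pderiv (vSel n x ⟨0, by omega⟩) (pderiv (vSel n y ⟨1, by omega⟩) P))
        + (∑ x : Bool, ∑ y : Bool,
            X (vSel n x ⟨1, by omega⟩) * X (vSel n y ⟨0, by omega⟩) *
              pderiv (vSel n x ⟨1, by omega⟩) (pderiv (vSel n y ⟨0, by omega⟩) P)
          + ∑ x : Bool, ∑ y : Bool,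
            X (vSel n x ⟨1, by omega⟩) * X (vSel n y ⟨1, by omega⟩) *
              pderiv (vSel n x ⟨1, by omega⟩) (pderiv (vSel n y ⟨1, by omega⟩) P))) := by
  have hv : ∀ (b : Bool) (i : Fin n), 2 ≤ (i : ℕ) → pderiv (vSel n b i) P = 0 := by
    intro b i hi
    cases b <;> simp [vSel, (hP i hi).1, (hP i hi).2]
  have hv2 : ∀ (b : Bool) (i : Fin n) (w), 2 ≤ (i : ℕ) →
      pderiv (vSel n b i) (pderiv w P) = 0 := by
    intro b i w hi
    rw [pderiv_pderiv_comm', hv b i hi, map_zero]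
  unfold casT
  rw [sum_two' hn _ (by
      intro i hi
      rw [(hP i hi).1, (hP i hi).2]; ring)]
  rw [sum_two' hn (f := fun i => ∑ j : Fin n, ∑ x : Bool, ∑ y : Bool,
      X (vSel n x i) * X (vSel n y j) * pderiv (vSel n x j) (pderiv (vSel n y i) P)) (by
      intro i hi
      apply Finset.sum_eq_zero; intro j _
      apply Finset.sum_eq_zero; intro x _
      apply Finset.sum_eq_zero; intro y _
      rw [hv y i hi, map_zero, mul_zero])]
  rw [sum_two' hn (f := fun i => ∑ j : Fin n, ∑ x : Bool, ∑ y : Bool,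
      X (vSel n x i) * X (vSel n y j) * pderiv (vSel n x i) (pderiv (vSel n y j) P)) (by
      intro i hi
      apply Finset.sum_eq_zero; intro j _
      apply Finset.sum_eq_zero; intro x _
      apply Finset.sum_eq_zero; intro y _
      rw [hv2 x i _ hi, mul_zero])]
  rw [sum_two' hn (f := fun j => ∑ x : Bool, ∑ y : Bool,
      X (vSel n x ⟨0, by omega⟩) * X (vSel n y j) *
        pderiv (vSel n x j) (pderiv (vSel n y ⟨0, by omega⟩) P)) (by
      intro j hj
      apply Finset.sum_eq_zero; intro x _
      apply Finset.sum_eq_zero; intro y _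
      rw [hv2 x j _ hj, mul_zero])]
  rw [sum_two' hn (f := fun j => ∑ x : Bool, ∑ y : Bool,
      X (vSel n x ⟨1, by omega⟩) * X (vSel n y j) *
        pderiv (vSel n x j) (pderiv (vSel n y ⟨1, by omega⟩) P)) (by
      intro j hj
      apply Finset.sum_eq_zero; intro x _
      apply Finset.sum_eq_zero; intro y _
      rw [hv2 x j _ hj, mul_zero])]
  rw [sum_two' hn (f := fun j => ∑ x : Bool, ∑ y : Bool,
      X (vSel n x ⟨0, by omega⟩) * X (vSel n y j) *
        pderiv (vSel n x ⟨0, by omega⟩) (pderiv (vSel n y j) P)) (by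
      intro j hj
      apply Finset.sum_eq_zero; intro x _
      apply Finset.sum_eq_zero; intro y _
      rw [hv y j hj, map_zero, mul_zero])]
  rw [sum_two' hn (f := fun j => ∑ x : Bool, ∑ y : Bool,
      X (vSel n x ⟨1, by omega⟩) * X (vSel n y j) *
        pderiv (vSel n x ⟨1, by omega⟩) (pderiv (vSel n y j) P)) (by
      intro j hj
      apply Finset.sum_eq_zero; intro x _
      apply Finset.sum_eq_zero; intro y _
      rw [hv y j hj, map_zero, mul_zero])]

private lemma pderiv_hwv_far (n : ℕ) (hn : 2 ≤ n) (k l q : ℕ) (i : Fin n)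
    (hi : 2 ≤ (i : ℕ)) :
    pderiv (Sum.inl i) (hwv n hn k l q) = 0 ∧ pderiv (Sum.inr i) (hwv n hn k l q) = 0 := by
  have h0 : ¬ ((0 : ℕ) = (i : ℕ)) := by omega
  have h1 : ¬ ((1 : ℕ) = (i : ℕ)) := by omega
  constructor <;>
    simp [hwv, pderiv_mul, pderiv_pow, pderiv_X_of_ne, pderiv_X_self, Fin.ext_iff, h0, h1]

set_option maxHeartbeats 0 in
private lemma key_eigen (n : ℕ) (hn : 2 ≤ n) (δ : ℝ) (q K L : ℕ) :
    casT n δ (hwv n hn (q + K) (q + L) q)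
      = C ((n : ℝ) * ((n : ℝ) + 1) * δ * (δ - 1)
            - 2 * (((n : ℝ) + 1) * δ - (n : ℝ) + (q : ℝ)) * (((q + K : ℕ) : ℝ) + ((q + L : ℕ) : ℝ))
            + 2 * (((q + K : ℕ) : ℝ) + ((q + L : ℕ) : ℝ)) ^ 2 + 2 * (q : ℝ) * ((q : ℝ) - 1))
          * hwv n hn (q + K) (q + L) q := by
  rw [casT_reduced n hn δ _ (fun i hi => pderiv_hwv_far n hn _ _ _ i hi)]
  have hA : ∀ (a b : Fin n), pderiv (R := ℝ) (Sum.inr b) (X (Sum.inl a)) = 0 :=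
    fun a b => pderiv_X_of_ne (by simp)
  have hB : ∀ (a b : Fin n), pderiv (R := ℝ) (Sum.inl b) (X (Sum.inr a)) = 0 :=
    fun a b => pderiv_X_of_ne (by simp)
  have h01 : pderiv ((Sum.inl (⟨1, by omega⟩ : Fin n)) : Fin n ⊕ Fin n)
      (X (Sum.inl (⟨0, by omega⟩ : Fin n)) : MvPolynomial (Fin n ⊕ Fin n) ℝ) = 0 :=
    pderiv_X_of_ne (by simp [Fin.ext_iff])
  have h10 : pderiv ((Sum.inl (⟨0, by omega⟩ : Fin n)) : Fin n ⊕ Fin n)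
      (X (Sum.inl (⟨1, by omega⟩ : Fin n)) : MvPolynomial (Fin n ⊕ Fin n) ℝ) = 0 :=
    pderiv_X_of_ne (by simp [Fin.ext_iff])
  have h01' : pderiv ((Sum.inr (⟨1, by omega⟩ : Fin n)) : Fin n ⊕ Fin n)
      (X (Sum.inr (⟨0, by omega⟩ : Fin n)) : MvPolynomial (Fin n ⊕ Fin n) ℝ) = 0 :=
    pderiv_X_of_ne (by simp [Fin.ext_iff])
  have h10' : pderiv ((Sum.inr (⟨0, by omega⟩ : Fin n)) : Fin n ⊕ Fin n)
      (X (Sum.inr (⟨1, by omega⟩ : Fin n)) : MvPolynomial (Fin n ⊕ Fin n) ℝ) = 0 :=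
    pderiv_X_of_ne (by simp [Fin.ext_iff])
  rcases q with _ | _ | e <;> rcases K with _ | _ | m <;> rcases L with _ | _ | r <;>
  · simp only [hwv, Nat.add_sub_cancel_left, Fintype.sum_bool, vSel, if_true, if_false,
      Bool.false_eq_true, ite_true, ite_false]
    simp only [pderiv_mul, pderiv_pow, pderiv_X_self, map_sub, map_add, Derivation.map_natCast,
      map_neg, Nat.add_sub_cancel, hA, hB, h01, h10, h01', h10', mul_zero, zero_mul, add_zero,
      zero_add, sub_zero, zero_sub, neg_zero, mul_one, one_mul]
    push_cast
    simp only [map_mul, map_add, map_sub, map_one, map_zero, map_ofNat, map_natCast, map_pow]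
    ring

/-- h_{k,l,q} is an eigenvector of C^t with eigenvalue γ_{k+l,q}. -/
theorem stmt15 (n : ℕ) (hn : 2 ≤ n) (δ : ℝ) (k l q : ℕ) (hqk : q ≤ k) (hql : q ≤ l) :
    casT n δ (hwv n hn k l q)
      = C ((n : ℝ) * ((n : ℝ) + 1) * δ * (δ - 1)
            - 2 * (((n : ℝ) + 1) * δ - (n : ℝ) + (q : ℝ)) * ((k : ℝ) + (l : ℝ))
            + 2 * ((k : ℝ) + (l : ℝ)) ^ 2 + 2 * (q : ℝ) * ((q : ℝ) - 1))
          * hwv n hn k l q := by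
  obtain ⟨K, rfl⟩ : ∃ K, k = q + K := ⟨k - q, by omega⟩
  obtain ⟨L, rfl⟩ : ∃ L, l = q + L := ⟨l - q, by omega⟩
  exact key_eigen n hn δ q K L
end
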